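/- arXiv:math/9906203 — 5 statements merged into one kernel-verified Lean document; each statement's English description precedes it below -/
import Mathlib

section
/- Let Π be a finite simple graph, W = W(Π) the associated simply-laced Coxeter group, (u,v) ∈ W × W with m = ℓ(u) + ℓ(v), and i ∈ R(u,v) a reduced word. Then for any non-empty subset S ⊆ B(i), there exists a vertex a ∈ [1,m] \ S such that {a,b} is an edge of Σ(i) for exactly one b ∈ S. -/
open scoped Classical

namespace SLC

variable {V : Type*} [DecidableEq V]

/-- The simply-laced Coxeter matrix associated with a simple graph `P`:
`M i i = 1`, `M i j = 3` if `i` and `j` are adjacent, and `M i j = 2` otherwise. -/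
noncomputable def coxeterMatrix (P : SimpleGraph V) : CoxeterMatrix V where
  M := fun i j => if i = j then 1 else if P.Adj i j then 3 else 2
  isSymm := by
    refine Matrix.IsSymm.ext fun i j => ?_
    show (if j = i then 1 else if P.Adj j i then 3 else 2) =
      (if i = j then 1 else if P.Adj i j then 3 else 2)
    by_cases h : i = j
    · subst h; rfl
    · rw [if_neg (Ne.symm h), if_neg h]
      by_cases ha : P.Adj i j
      · rw [if_pos (P.adj_symm ha), if_pos ha]
      · rw [if_neg (fun hc => ha (P.adj_symm hc)), if_neg ha]
  diagonal := by intro i; simp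
  off_diagonal := by
    intro i i' h
    show (if i = i' then 1 else if P.Adj i i' then 3 else 2) ≠ 1
    rw [if_neg h]
    split <;> omega

/-- `e` is a reduced word for the pair `(u, v)`: the subword of entries with negative sign
(first component `false`), with signs forgotten, is a reduced word for `u`, and the subword of
entries with positive sign is a reduced word for `v`. -/
def IsRWordPair {W : Type*} [Group W] (P : SimpleGraph V)
    (cs : CoxeterSystem (coxeterMatrix P) W) (u v : W) {m : ℕ}
    (e : Fin m → Bool × V) : Prop :=
  cs.wordProd (((List.ofFn e).filter fun p => !p.1).map Prod.snd) = u ∧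
    (((List.ofFn e).filter fun p => !p.1).map Prod.snd).length = cs.length u ∧
    cs.wordProd (((List.ofFn e).filter fun p => p.1).map Prod.snd) = v ∧
    (((List.ofFn e).filter fun p => p.1).map Prod.snd).length = cs.length v

/-- `k = l⁻`: `k` is the largest index smaller than `l` carrying the same letter of `P`. -/
def IsPred {m : ℕ} (e : Fin m → Bool × V) (k l : Fin m) : Prop :=
  k < l ∧ (e k).2 = (e l).2 ∧ ∀ j, k < j → j < l → (e j).2 ≠ (e l).2

/-- The index `l` is `e`-bounded: `l⁻ > 0`, i.e. `l` has a predecessor. -/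
def BoundedIdx {m : ℕ} (e : Fin m → Bool × V) (l : Fin m) : Prop :=
  ∃ k, IsPred e k l

/-- Conditions (ii) and (iii) of Definition 3.1 (inclined edges), for `k < l`. -/
def InclCond {m : ℕ} (P : SimpleGraph V) (e : Fin m → Bool × V) (k l : Fin m) : Prop :=
  k < l ∧ P.Adj (e k).2 (e l).2 ∧
    ((∃ p, IsPred e p l ∧ p < k ∧ (∀ q, IsPred e q k → q < p) ∧ (e p).1 = (e k).1) ∨
     (∃ q, IsPred e q k ∧ (∀ p, IsPred e p l → p < q) ∧ (e q).1 = !(e k).1))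

/-- `a → b` is a directed edge of the graph `Σ(e)`. -/
def DirEdge {m : ℕ} (P : SimpleGraph V) (e : Fin m → Bool × V) (a b : Fin m) : Prop :=
  (IsPred e a b ∧ (e a).1 = true) ∨ (IsPred e b a ∧ (e b).1 = false) ∨
    (InclCond P e a b ∧ (e a).1 = false) ∨ (InclCond P e b a ∧ (e b).1 = true)

/-- `{a, b}` is an edge of the graph `Σ(e)` (in some direction). -/
def UEdge {m : ℕ} (P : SimpleGraph V) (e : Fin m → Bool × V) (a b : Fin m) : Prop :=
  DirEdge P e a b ∨ DirEdge P e b a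

/-- Adjacency in the doubled graph `P̃`. -/
def TAdj (P : SimpleGraph V) (p q : Bool × V) : Prop :=
  p.1 = q.1 ∧ P.Adj p.2 q.2

/-- The negative of a letter of `P̃`. -/
def negEnt (p : Bool × V) : Bool × V := (!p.1, p.2)

/-- The combinatorial data of a 2- or 3-move: the (consecutive) positions involved. -/
inductive MoveSpec (m : ℕ) where
  | two (a b : Fin m)
  | three (a b c : Fin m)

/-- The position of a move (the last of the positions involved). -/
def MoveSpec.pos {m : ℕ} : MoveSpec m → Fin m
  | .two _ b => b
  | .three _ _ c => c

/-- `e'` is obtained from `e` by the 2- or 3-move described by `s`. -/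
def IsMove {m : ℕ} (P : SimpleGraph V) (e e' : Fin m → Bool × V) : MoveSpec m → Prop
  | .two a b => (b : ℕ) = (a : ℕ) + 1 ∧ ¬ TAdj P (e a) (e b) ∧
      e' a = e b ∧ e' b = e a ∧ ∀ l, l ≠ a → l ≠ b → e' l = e l
  | .three a b c => (b : ℕ) = (a : ℕ) + 1 ∧ (c : ℕ) = (b : ℕ) + 1 ∧
      e c = e a ∧ TAdj P (e b) (e c) ∧
      e' a = e b ∧ e' b = e a ∧ e' c = e b ∧ ∀ l, l ≠ a → l ≠ b → l ≠ c → e' l = e l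

/-- A move is trivial if it is a 2-move interchanging entries which are not opposite. -/
def MoveTrivial {m : ℕ} (e : Fin m → Bool × V) : MoveSpec m → Prop
  | .two a b => e b ≠ negEnt (e a)
  | .three _ _ _ => False

/-- The permutation `σ` associated with a move. -/
noncomputable def moveSigma {m : ℕ} (e : Fin m → Bool × V) : MoveSpec m → Equiv.Perm (Fin m)
  | .two a b => if e b = negEnt (e a) then 1 else Equiv.swap a b
  | .three a b _ => Equiv.swap a b

/-- The skew-symmetric form `Ω` of the graph `Σ(e)`, over a commutative ring `R`. -/
noncomputable def omegaForm (R : Type*) [CommRing R] {m : ℕ} (P : SimpleGraph V)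
    (e : Fin m → Bool × V) (x y : Fin m → R) : R :=
  ∑ a : Fin m, ∑ b : Fin m, if DirEdge P e a b then x a * y b - x b * y a else 0

/-- The symplectic transvection `τ_k` of the graph `Σ(e)`, over `R`. -/
noncomputable def transv (R : Type*) [CommRing R] {m : ℕ} (P : SimpleGraph V)
    (e : Fin m → Bool × V) (k : Fin m) (x : Fin m → R) : Fin m → R :=
  x - omegaForm R P e x (Pi.single k 1) • (Pi.single k 1 : Fin m → R)

/-- The group `Γ_e ⊆ GL_m(ℤ)` generated by the transvections `τ_k`, `k ∈ B(e)`. -/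
noncomputable def Gamma {m : ℕ} (P : SimpleGraph V) (e : Fin m → Bool × V) :
    Subgroup ((Fin m → ℤ) ≃ₗ[ℤ] (Fin m → ℤ)) :=
  Subgroup.closure {g | ∃ k, BoundedIdx e k ∧ ⇑g = transv ℤ P e k}

/-- The group `Γ_e(F₂)` of linear transformations of `F₂^m` generated by the reductions
modulo 2 of the transvections `τ_k`, `k ∈ B(e)`. -/
noncomputable def GammaF2 {m : ℕ} (P : SimpleGraph V) (e : Fin m → Bool × V) :
    Subgroup (Equiv.Perm (Fin m → ZMod 2)) :=
  Subgroup.closure {g | ∃ k, BoundedIdx e k ∧ ⇑g = transv (ZMod 2) P e k}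

/-- The map `φ⁺` associated with a move. -/
noncomputable def phiP {m : ℕ} (P : SimpleGraph V) (e : Fin m → Bool × V) (s : MoveSpec m)
    (x : Fin m → ℤ) : Fin m → ℤ := fun l =>
  if l = s.pos ∧ ¬ MoveTrivial e s then
    (∑ a : Fin m, if DirEdge P e a s.pos then x a else 0) - x s.pos
  else x (moveSigma e s l)

/-- The map `φ⁻` associated with a move. -/
noncomputable def phiM {m : ℕ} (P : SimpleGraph V) (e : Fin m → Bool × V) (s : MoveSpec m)
    (x : Fin m → ℤ) : Fin m → ℤ := fun l =>
  if l = s.pos ∧ ¬ MoveTrivial e s then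
    (∑ b : Fin m, if DirEdge P e s.pos b then x b else 0) - x s.pos
  else x (moveSigma e s l)


/-!
The boundary vertex is the smallest index `a` of the form `l⁻` with `l ∈ S`. Every element of `S`
is bounded, so it lies strictly above its own predecessor and hence above `a`; in particular
`a ∉ S`. Between `a` and a larger index there are only two kinds of edges: the horizontal edge to
the unique `l` with `l⁻ = a`, and inclined edges, which would force some `l ∈ S` to have
`l⁻ < a`.
-/

section BoundaryVertex

variable {V : Type*} {m : ℕ} {e : Fin m → Bool × V}

theorem IsPred.right_unique {k b c : Fin m} (hb : IsPred e k b) (hc : IsPred e k c) : b = c := by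
  by_contra hne
  rcases lt_or_gt_of_ne hne with h | h
  · exact hc.2.2 b hb.1 h (hb.2.1.symm.trans hc.2.1)
  · exact hb.2.2 c hc.1 h (hc.2.1.symm.trans hb.2.1)

theorem uEdge_iff_of_lt (P : SimpleGraph V) {a c : Fin m} (hac : a < c) :
    UEdge P e a c ↔ IsPred e a c ∨ InclCond P e a c := by
  have not_pred : ¬ IsPred e c a := fun h => lt_asymm hac h.1
  have not_incl : ¬ InclCond P e c a := fun h => lt_asymm hac h.1
  constructor
  · rintro ((⟨h, -⟩ | ⟨h, -⟩ | ⟨h, -⟩ | ⟨h, -⟩) | (⟨h, -⟩ | ⟨h, -⟩ | ⟨h, -⟩ | ⟨h, -⟩)) <;>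
      first | exact Or.inl h | exact Or.inr h | exact absurd h not_pred | exact absurd h not_incl
  · rintro (h | h) <;> cases hsign : (e a).1
    · exact Or.inr (Or.inr (Or.inl ⟨h, hsign⟩))
    · exact Or.inl (Or.inl ⟨h, hsign⟩)
    · exact Or.inl (Or.inr (Or.inr (Or.inl ⟨h, hsign⟩)))
    · exact Or.inr (Or.inr (Or.inr (Or.inr ⟨h, hsign⟩)))

variable {S : Set (Fin m)}

theorem exists_isPred_le_preds (hSB : ∀ l ∈ S, BoundedIdx e l) (hS : S.Nonempty) :
    ∃ a, ∃ b ∈ S, IsPred e a b ∧ ∀ c ∈ S, ∀ p, IsPred e p c → a ≤ p := by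
  obtain ⟨b, hb⟩ := hS
  obtain ⟨k, hk⟩ := hSB b hb
  obtain ⟨a, ⟨b₀, hb₀, hab₀⟩, hmin⟩ :=
    Set.exists_min_image {k | ∃ b ∈ S, IsPred e k b} id (Set.toFinite _) ⟨k, b, hb, hk⟩
  exact ⟨a, b₀, hb₀, hab₀, fun c hc p hp => hmin p ⟨c, hc, hp⟩⟩

theorem lt_of_le_preds (hSB : ∀ l ∈ S, BoundedIdx e l) {a : Fin m}
    (ha : ∀ c ∈ S, ∀ p, IsPred e p c → a ≤ p) {c : Fin m} (hc : c ∈ S) : a < c := by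
  obtain ⟨p, hp⟩ := hSB c hc
  exact (ha c hc p hp).trans_lt hp.1

theorem not_inclCond_of_le_preds (hSB : ∀ l ∈ S, BoundedIdx e l) {a : Fin m}
    (ha : ∀ c ∈ S, ∀ p, IsPred e p c → a ≤ p) (P : SimpleGraph V) {c : Fin m} (hc : c ∈ S) :
    ¬ InclCond P e a c := by
  rintro ⟨-, -, ⟨p, hp, hpa, -⟩ | ⟨q, hq, hlt, -⟩⟩
  · exact (ha c hc p hp).not_gt hpa
  · obtain ⟨p, hp⟩ := hSB c hc
    exact (ha c hc p hp).not_gt ((hlt p hp).trans hq.1)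

end BoundaryVertex

variable {V : Type*} [DecidableEq V] [Fintype V] {W : Type*} [Group W]

theorem boundary_vertex_general (P : SimpleGraph V) {m : ℕ} (e : Fin m → Bool × V)
    (S : Set (Fin m)) (hS : S.Nonempty) (hSB : ∀ l ∈ S, BoundedIdx e l) :
    ∃ a ∉ S, ∃! b, b ∈ S ∧ UEdge P e a b := by
  obtain ⟨a, b, hb, hab, ha⟩ := exists_isPred_le_preds hSB hS
  have above {c : Fin m} (hc : c ∈ S) : a < c := lt_of_le_preds hSB ha hc
  refine ⟨a, fun haS => lt_irrefl a (above haS), b, ⟨hb, ?_⟩, ?_⟩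
  · exact (uEdge_iff_of_lt P hab.1).2 (Or.inl hab)
  · rintro c ⟨hc, hac⟩
    rcases (uEdge_iff_of_lt P (above hc)).1 hac with hpred | hincl
    · exact hpred.right_unique hab
    · exact absurd hincl (not_inclCond_of_le_preds hSB ha P hc)

/-- Proposition 3.2: for any non-empty subset `S ⊆ B(i)` there is a vertex `a ∉ S`
joined by an edge of `Σ(i)` to exactly one element of `S`. -/
theorem boundary_vertex (P : SimpleGraph V) (cs : CoxeterSystem (coxeterMatrix P) W)
    (u v : W) {m : ℕ} (hm : m = cs.length u + cs.length v)
    (e : Fin m → Bool × V) (he : IsRWordPair P cs u v e)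
    (S : Set (Fin m)) (hS : S.Nonempty) (hSB : ∀ l ∈ S, BoundedIdx e l) :
    ∃ a ∉ S, ∃! b, b ∈ S ∧ UEdge P e a b :=
  boundary_vertex_general P e S hS hSB

end SLC
end

section
/- Let i ∈ R(u,v) be a reduced word and {i,j} an edge of Π. Let {B,C} and {B',C'} (with B ≺ C, B' ≺ C', C ≺ C') be two consecutive inclined edges of the (i,j)-strip of Σ(i), i.e., no vertex D with B ≺ D ≺ B' is the left end of an inclined edge of the strip. Then the boundary of the triangle or trapezoid formed by these two inclined edges and the horizontal segments between their endpoints on each level (these horizontal segments being paths of consecutive horizontal edges of the strip) is a directed cycle in Σ_{i,j}(i). -/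
/-!
Write `c(p) = y(p) ε(p)` for the charge of a vertex of the strip. An inclined edge of the strip
starts at `k` exactly when `c(k)` differs from the charge of the previous strip vertex; it then
ends at the first vertex after `k` on the other level. As no inclined edge starts strictly between
`B` and `B'`, the charge is constant on the strip vertices in `[B, B')`, and it changes at `B'`.
Every polygon vertex has exactly two boundary neighbours, one towards `{B,C}` and one towards
`{B',C'}`. A horizontal edge `k → l` (`k < l`) points right iff `ε(k) = +`, an inclined one iff
`ε(k) = −`, so the charge facts say that one of the two sides enters the vertex and the other
leaves it.
-/

open scoped Classical

namespace SLC

variable {V : Type*} [DecidableEq V]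

variable {V : Type*} [DecidableEq V] [Fintype V] {W : Type*} [Group W]

/-- `p` belongs to the `(i,j)`-strip of `Σ(e)`. -/
def InStrip (i j : V) {m : ℕ} (e : Fin m → Bool × V) (p : Fin m) : Prop :=
  (e p).2 = i ∨ (e p).2 = j

/-- `p` is a vertex of the polygon bounded by two consecutive inclined edges `{B,C}` and
`{B',C'}`: a strip vertex lying (weakly) between `B` and `C'` and not strictly between
`B'` and `C'`. -/
def PolyVert (i j : V) {m : ℕ} (e : Fin m → Bool × V) (B B' C' : Fin m) (p : Fin m) : Prop :=
  InStrip i j e p ∧ B ≤ p ∧ p ≤ C' ∧ ¬ (B' < p ∧ p < C')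

/-- `{p, q}` is a side of the boundary of the polygon: one of the two inclined edges, or a
horizontal segment between consecutive polygon vertices of the same level. -/
def PolySide (i j : V) {m : ℕ} (e : Fin m → Bool × V) (B C B' C' : Fin m) (p q : Fin m) : Prop :=
  (p = B ∧ q = C) ∨ (p = B' ∧ q = C') ∨
    (PolyVert i j e B B' C' p ∧ PolyVert i j e B B' C' q ∧ p < q ∧ (e p).2 = (e q).2 ∧
      ∀ r, PolyVert i j e B B' C' r → (e r).2 = (e p).2 → ¬ (p < r ∧ r < q))

theorem existsUnique_out_and_in {α : Type*} {N : α → Prop} {D : α → α → Prop} {p x y : α}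
    (hN : ∀ q, N q ↔ q = x ∨ q = y) (hswap : ∀ q, N q → (D q p ↔ ¬ D p q))
    (hflow : D x p ↔ D p y) : (∃! q, N q ∧ D p q) ∧ ∃! q, N q ∧ D q p := by
  have hx := hswap x ((hN x).2 (Or.inl rfl))
  have hy := hswap y ((hN y).2 (Or.inr rfl))
  by_cases hpy : D p y
  · refine ⟨⟨y, ⟨(hN y).2 (Or.inr rfl), hpy⟩, fun q ⟨hq, hpq⟩ => ?_⟩,
      ⟨x, ⟨(hN x).2 (Or.inl rfl), hflow.2 hpy⟩, fun q ⟨hq, hqp⟩ => ?_⟩⟩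
    · rcases (hN q).1 hq with rfl | rfl
      · exact absurd hpq (hx.1 (hflow.2 hpy))
      · rfl
    · rcases (hN q).1 hq with rfl | rfl
      · rfl
      · exact absurd hpy (hy.1 hqp)
  · refine ⟨⟨x, ⟨(hN x).2 (Or.inl rfl), ?_⟩, fun q ⟨hq, hpq⟩ => ?_⟩,
      ⟨y, ⟨(hN y).2 (Or.inr rfl), hy.2 hpy⟩, fun q ⟨hq, hqp⟩ => ?_⟩⟩
    · exact not_not.1 (mt hx.2 (mt hflow.1 hpy))
    · rcases (hN q).1 hq with rfl | rfl
      · rfl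
      · exact absurd hpq hpy
    · rcases (hN q).1 hq with rfl | rfl
      · exact absurd (hflow.1 hqp) hpy
      · rfl

section

variable {V : Type*} {m : ℕ} {P : SimpleGraph V} {e : Fin m → Bool × V} {i j : V}
  {k l p q r w : Fin m}

theorem exists_isPred_of_lt (hr : (e r).2 = (e l).2) (hrl : r < l) :
    ∃ k, IsPred e k l ∧ r ≤ k := by
  obtain ⟨k, ⟨hkl, hk⟩, hmax⟩ := Set.exists_max_image {k | k < l ∧ (e k).2 = (e l).2} id
    (Set.toFinite _) ⟨r, hrl, hr⟩
  exact ⟨k, ⟨hkl, hk, fun s hks hsl hs => (hmax s ⟨hsl, hs⟩).not_gt hks⟩,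
    hmax r ⟨hrl, hr⟩⟩

theorem InclCond.level_ne (h : InclCond P e k l) (hkr : k < r) (hrl : r < l) :
    (e r).2 ≠ (e l).2 := by
  intro hr
  rcases h.2.2 with ⟨p, hpl, hpk, -, -⟩ | ⟨q, hqk, hpq, -⟩
  · exact hpl.2.2 r (hpk.trans hkr) hrl hr
  · obtain ⟨p, hpl, hrp⟩ := exists_isPred_of_lt hr hrl
    exact (hpq p hpl).not_ge (hqk.1.trans hkr |>.le.trans hrp)

theorem IsPred.dirEdge_iff (h : IsPred e k l) : DirEdge P e k l ↔ (e k).1 = true := by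
  refine ⟨?_, fun hk => Or.inl ⟨h, hk⟩⟩
  rintro (⟨-, hk⟩ | ⟨hlk, -⟩ | ⟨hI, -⟩ | ⟨hI, -⟩)
  · exact hk
  · exact absurd hlk.1 h.1.not_gt
  · exact absurd hI.2.1 (h.2.1 ▸ P.irrefl)
  · exact absurd hI.1 h.1.not_gt

theorem IsPred.dirEdge_swap_iff (h : IsPred e k l) : DirEdge P e l k ↔ (e k).1 = false := by
  refine ⟨?_, fun hk => Or.inr (Or.inl ⟨h, hk⟩)⟩
  rintro (⟨hlk, -⟩ | ⟨-, hk⟩ | ⟨hI, -⟩ | ⟨hI, -⟩)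
  · exact absurd hlk.1 h.1.not_gt
  · exact hk
  · exact absurd hI.1 h.1.not_gt
  · exact absurd hI.2.1 (h.2.1 ▸ P.irrefl)

theorem InclCond.dirEdge_iff (h : InclCond P e k l) : DirEdge P e k l ↔ (e k).1 = false := by
  refine ⟨?_, fun hk => Or.inr (Or.inr (Or.inl ⟨h, hk⟩))⟩
  rintro (⟨hkl, -⟩ | ⟨hlk, -⟩ | ⟨-, hk⟩ | ⟨hI, -⟩)
  · exact absurd hkl.2.1 h.2.1.ne
  · exact absurd hlk.1 h.1.not_gt
  · exact hk
  · exact absurd hI.1 h.1.not_gt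

theorem InclCond.dirEdge_swap_iff (h : InclCond P e k l) :
    DirEdge P e l k ↔ (e k).1 = true := by
  refine ⟨?_, fun hk => Or.inr (Or.inr (Or.inr ⟨h, hk⟩))⟩
  rintro (⟨hlk, -⟩ | ⟨hkl, -⟩ | ⟨hI, -⟩ | ⟨-, hk⟩)
  · exact absurd hlk.1 h.1.not_gt
  · exact absurd hkl.2.1 h.2.1.ne
  · exact absurd hI.1 h.1.not_gt
  · exact hk

theorem InStrip.of_level_eq (hp : InStrip i j e p) (hr : (e r).2 = (e p).2) :
    InStrip i j e r :=
  hp.imp hr.trans hr.trans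

theorem InStrip.iff_of_level_ne (hk : InStrip i j e k) (hl : InStrip i j e l)
    (hkl : (e k).2 ≠ (e l).2) : InStrip i j e r ↔ (e r).2 = (e k).2 ∨ (e r).2 = (e l).2 := by
  unfold InStrip at *
  rcases hk with hk | hk <;> rcases hl with hl | hl <;> rw [hk, hl] at hkl ⊢ <;>
    first | exact absurd rfl hkl | tauto

theorem InStrip.adj (hij : P.Adj i j) (hk : InStrip i j e k) (hl : InStrip i j e l)
    (hkl : (e k).2 ≠ (e l).2) : P.Adj (e k).2 (e l).2 := by
  rcases hk with hk | hk <;> rcases hl with hl | hl <;> rw [hk, hl] at hkl ⊢ <;>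
    first | exact absurd rfl hkl | exact hij | exact hij.symm

/-- The charge `c = y ε` of a vertex of the `(i,j)`-strip, with the level `y` equal to `+1`
exactly on `j`, and `true` standing for `+1`. -/
noncomputable def charge (j : V) (e : Fin m → Bool × V) (p : Fin m) : Bool :=
  (e p).1 == decide ((e p).2 = j)

theorem InStrip.fst_eq_iff (hij : i ≠ j) (hp : InStrip i j e p) (hq : InStrip i j e q) :
    (e p).1 = (e q).1 ↔ (charge j e p = charge j e q ↔ (e p).2 = (e q).2) := by
  unfold charge
  rcases hp with hp | hp <;> rcases hq with hq | hq <;> simp only [hp, hq, hij, hij.symm] <;>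
    cases (e p).1 <;> cases (e q).1 <;> decide

def IsStripPred (i j : V) (e : Fin m → Bool × V) (w k : Fin m) : Prop :=
  w < k ∧ InStrip i j e w ∧ ∀ r, w < r → r < k → ¬ InStrip i j e r

theorem InclCond.exists_isStripPred_charge_ne (hij : i ≠ j) (hk : InStrip i j e k)
    (hl : InStrip i j e l) (h : InclCond P e k l) :
    ∃ w, IsStripPred i j e w k ∧ charge j e w ≠ charge j e k := by
  have hstrip (r : Fin m) := InStrip.iff_of_level_ne (r := r) hk hl h.2.1.ne
  rcases h.2.2 with ⟨p, hpl, hpk, hq, hsg⟩ | ⟨q, hqk, hp, hsg⟩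
  · have hps : InStrip i j e p := (hstrip p).2 (Or.inr hpl.2.1)
    refine ⟨p, ⟨hpk, hps, fun r hpr hrk hr => ?_⟩, fun hc => h.2.1.ne ?_⟩
    · rcases (hstrip r).1 hr with hr | hr
      · obtain ⟨q, hqk, hrq⟩ := exists_isPred_of_lt hr hrk
        exact (hq q hqk).not_ge (hpr.le.trans hrq)
      · exact hpl.2.2 r hpr (hrk.trans h.1) hr
    · exact ((hps.fst_eq_iff hij hk).1 hsg |>.1 hc).symm.trans hpl.2.1
  · have hqs : InStrip i j e q := (hstrip q).2 (Or.inl hqk.2.1)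
    refine ⟨q, ⟨hqk.1, hqs, fun r hqr hrk hr => ?_⟩, fun hc => ?_⟩
    · rcases (hstrip r).1 hr with hr | hr
      · exact hqk.2.2 r hqr hrk hr
      · obtain ⟨p, hpl, hrp⟩ := exists_isPred_of_lt hr (hrk.trans h.1)
        exact (hp p hpl).not_ge (hqr.le.trans hrp)
    · have := (hqs.fst_eq_iff hij hk).2 (iff_of_true hc hqk.2.1)
      rw [hsg] at this
      exact Bool.not_ne_self _ this

theorem inclCond_of_isStripPred (hij : i ≠ j) (hk : InStrip i j e k) (hl : InStrip i j e l)
    (hadj : P.Adj (e k).2 (e l).2) (hkl : k < l)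
    (hnb : ∀ r, k < r → r < l → (e r).2 ≠ (e l).2)
    (hw : IsStripPred i j e w k) (hc : charge j e w ≠ charge j e k) : InclCond P e k l := by
  obtain ⟨hwk, hws, hgap⟩ := hw
  have hstrip (r : Fin m) := InStrip.iff_of_level_ne (r := r) hk hl hadj.ne
  have hout (r : Fin m) (hwr : w < r) (hrk : r < k) :
      (e r).2 ≠ (e k).2 ∧ (e r).2 ≠ (e l).2 :=
    not_or.1 (mt (hstrip r).2 (hgap r hwr hrk))
  have hfst := hws.fst_eq_iff hij hk
  refine ⟨hkl, hadj, ?_⟩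
  rcases (hstrip w).1 hws with hwlev | hwlev
  · refine Or.inr ⟨w, ⟨hwk, hwlev, fun r hwr hrk => (hout r hwr hrk).1⟩,
      fun p hp => ?_, ?_⟩
    · by_contra! hwp
      rcases hwp.eq_or_lt with rfl | hwp
      · exact hadj.ne (hwlev.symm.trans hp.2.1)
      rcases lt_trichotomy p k with hpk | rfl | hkp
      · exact (hout p hwp hpk).2 hp.2.1
      · exact hadj.ne hp.2.1
      · exact hnb p hkp hp.1 hp.2.1
    · exact Bool.eq_not.2 fun hsg => hc ((hfst.1 hsg).2 hwlev)
  · refine Or.inl ⟨w, ⟨hwk.trans hkl, hwlev, fun r hwr hrl hr => ?_⟩, hwk,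
      fun q hq => ?_, ?_⟩
    · rcases lt_trichotomy r k with hrk | rfl | hkr
      · exact (hout r hwr hrk).2 hr
      · exact hadj.ne hr
      · exact hnb r hkr hrl hr
    · by_contra! hwq
      rcases hwq.eq_or_lt with rfl | hwq
      · exact hadj.ne (hq.2.1.symm.trans hwlev)
      · exact (hout q hwq hq.1).1 hq.2.1
    · by_contra hsg
      exact hc (by simpa [hwlev, hadj.ne.symm] using mt hfst.2 hsg)

section Polygon

variable {B C B' C' x y : Fin m}

def PolyHSide (i j : V) (e : Fin m → Bool × V) (B B' C' : Fin m) (p q : Fin m) : Prop :=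
  PolyVert i j e B B' C' p ∧ PolyVert i j e B B' C' q ∧ p < q ∧ (e p).2 = (e q).2 ∧
    ∀ r, PolyVert i j e B B' C' r → (e r).2 = (e p).2 → ¬ (p < r ∧ r < q)

/-- `x` is the neighbour of `p` on the boundary on the side of the inclined edge `{B,C}`. -/
def PolyLeft (i j : V) (e : Fin m → Bool × V) (B C B' C' : Fin m) (p x : Fin m) : Prop :=
  PolyHSide i j e B B' C' x p ∨ (p = B ∧ x = C) ∨ (p = C ∧ x = B)

/-- `y` is the neighbour of `p` on the boundary on the side of the inclined edge `{B',C'}`. -/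
def PolyRight (i j : V) (e : Fin m → Bool × V) (B B' C' : Fin m) (p y : Fin m) : Prop :=
  PolyHSide i j e B B' C' p y ∨ (p = B' ∧ y = C') ∨ (p = C' ∧ y = B')

theorem polySide_or_polySide_iff :
    PolySide i j e B C B' C' p q ∨ PolySide i j e B C B' C' q p ↔
      PolyLeft i j e B C B' C' p q ∨ PolyRight i j e B B' C' p q := by
  unfold PolySide PolyLeft PolyRight PolyHSide
  tauto

theorem PolyVert.le_or_eq (hp : PolyVert i j e B B' C' p) : p ≤ B' ∨ p = C' :=
  (le_or_gt p B').imp_right fun hB'p => hp.2.2.1.eq_or_lt.resolve_right fun hpC' =>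
    hp.2.2.2 ⟨hB'p, hpC'⟩

theorem PolyHSide.left_unique (hx : PolyHSide i j e B B' C' x p)
    (hy : PolyHSide i j e B B' C' y p) : x = y := by
  rcases lt_trichotomy x y with hxy | hxy | hxy
  · exact absurd ⟨hxy, hy.2.2.1⟩ (hx.2.2.2.2 y hy.1 (hy.2.2.2.1.trans hx.2.2.2.1.symm))
  · exact hxy
  · exact absurd ⟨hxy, hx.2.2.1⟩ (hy.2.2.2.2 x hx.1 (hx.2.2.2.1.trans hy.2.2.2.1.symm))

theorem PolyHSide.right_unique (hx : PolyHSide i j e B B' C' p x)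
    (hy : PolyHSide i j e B B' C' p y) : x = y := by
  rcases lt_trichotomy x y with hxy | hxy | hxy
  · exact absurd ⟨hx.2.2.1, hxy⟩ (hy.2.2.2.2 x hx.2.1 hx.2.2.2.1.symm)
  · exact hxy
  · exact absurd ⟨hy.2.2.1, hxy⟩ (hx.2.2.2.2 y hy.2.1 hy.2.2.2.1.symm)

theorem exists_polyHSide_left (hp : PolyVert i j e B B' C' p) (hq : PolyVert i j e B B' C' q)
    (hpq : p < q) (hlev : (e p).2 = (e q).2) : ∃ x, PolyHSide i j e B B' C' x q := by
  obtain ⟨x, ⟨hx, hxq, hxlev⟩, hmax⟩ := Set.exists_max_image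
    {x | PolyVert i j e B B' C' x ∧ x < q ∧ (e x).2 = (e q).2} id (Set.toFinite _)
    ⟨p, hp, hpq, hlev⟩
  exact ⟨x, hx, hq, hxq, hxlev, fun r hr hrlev hxr =>
    (hmax r ⟨hr, hxr.2, hrlev.trans hxlev⟩).not_gt hxr.1⟩

theorem exists_polyHSide_right (hp : PolyVert i j e B B' C' p) (hq : PolyVert i j e B B' C' q)
    (hpq : p < q) (hlev : (e p).2 = (e q).2) : ∃ y, PolyHSide i j e B B' C' p y := by
  obtain ⟨y, ⟨hy, hpy, hylev⟩, hmin⟩ := Set.exists_min_image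
    {y | PolyVert i j e B B' C' y ∧ p < y ∧ (e y).2 = (e p).2} id (Set.toFinite _)
    ⟨q, hq, hpq, hlev.symm⟩
  exact ⟨y, hp, hy, hpy, hylev.symm, fun r hr hrlev hpr =>
    (hmin r ⟨hr, hpr.1, hrlev⟩).not_gt hpr.2⟩

end Polygon

structure ConsecutiveInclined (P : SimpleGraph V) (e : Fin m → Bool × V) (i j : V)
    (B C B' C' : Fin m) : Prop where
  adj : P.Adj i j
  strip_B : InStrip i j e B
  strip_C : InStrip i j e C
  strip_B' : InStrip i j e B'
  strip_C' : InStrip i j e C'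
  incl : InclCond P e B C
  incl' : InclCond P e B' C'
  B_lt_B' : B < B'
  C_lt_C' : C < C'
  consecutive : ∀ D E : Fin m, B < D → D < B' → InStrip i j e D → InStrip i j e E →
    ¬ InclCond P e D E

namespace ConsecutiveInclined

variable {B C B' C' : Fin m} (h : ConsecutiveInclined P e i j B C B' C')
include h

theorem level_eq_B_or_C (hr : InStrip i j e r) : (e r).2 = (e B).2 ∨ (e r).2 = (e C).2 :=
  (InStrip.iff_of_level_ne h.strip_B h.strip_C h.incl.2.1.ne).1 hr

theorem level_eq_B'_or_C' (hr : InStrip i j e r) : (e r).2 = (e B').2 ∨ (e r).2 = (e C').2 :=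
  (InStrip.iff_of_level_ne h.strip_B' h.strip_C' h.incl'.2.1.ne).1 hr

theorem C_le_B' : C ≤ B' := by
  by_contra! hB'C
  have hB' : (e B').2 = (e B).2 :=
    (h.level_eq_B_or_C h.strip_B').resolve_right (h.incl.level_ne h.B_lt_B' hB'C)
  have hC' : (e C').2 = (e C).2 :=
    (h.level_eq_B_or_C h.strip_C').resolve_left fun hC' => h.incl'.2.1.ne (hB'.trans hC'.symm)
  exact h.incl'.level_ne hB'C h.C_lt_C' hC'.symm

theorem exists_inclCond_of_charge_ne (hk : InStrip i j e k) (hkB' : k < B')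
    (hw : IsStripPred i j e w k) (hc : charge j e w ≠ charge j e k) :
    ∃ l, InStrip i j e l ∧ InclCond P e k l := by
  obtain ⟨l₀, hkl₀, hl₀, hlev⟩ : ∃ l₀, k < l₀ ∧ InStrip i j e l₀ ∧ (e l₀).2 ≠ (e k).2 := by
    rcases h.level_eq_B'_or_C' hk with hk' | hk'
    · exact ⟨C', hkB'.trans h.incl'.1, h.strip_C', hk' ▸ h.incl'.2.1.ne.symm⟩
    · exact ⟨B', hkB', h.strip_B', hk' ▸ h.incl'.2.1.ne⟩
  obtain ⟨l, ⟨hkl, hl⟩, hmin⟩ := Set.exists_min_image {l | k < l ∧ (e l).2 = (e l₀).2} id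
    (Set.toFinite _) ⟨l₀, hkl₀, rfl⟩
  have hls : InStrip i j e l := hl₀.of_level_eq hl
  refine ⟨l, hls, inclCond_of_isStripPred h.adj.ne hk hls ?_ hkl ?_ hw hc⟩
  · exact hk.adj h.adj hls fun hkl' => hlev (hl.symm.trans hkl'.symm)
  · exact fun r hkr hrl hr => (hmin r ⟨hkr, hr.trans hl⟩).not_gt hrl

theorem charge_eq_of_lt (hp : InStrip i j e p) (hBp : B ≤ p) (hpB' : p < B') :
    charge j e p = charge j e B := by
  induction p using WellFoundedLT.induction with
  | _ p ih =>
  rcases hBp.eq_or_lt with rfl | hBp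
  · rfl
  obtain ⟨w, ⟨hwp, hw⟩, hmax⟩ := Set.exists_max_image {w | w < p ∧ InStrip i j e w} id
    (Set.toFinite _) ⟨B, hBp, h.strip_B⟩
  have hBw : B ≤ w := hmax B ⟨hBp, h.strip_B⟩
  rw [← ih w hwp hw hBw (hwp.trans hpB')]
  by_contra hc
  have hwp' : IsStripPred i j e w p :=
    ⟨hwp, hw, fun r hwr hrp hr => (hmax r ⟨hrp, hr⟩).not_gt hwr⟩
  obtain ⟨l, hl, hpl⟩ := h.exists_inclCond_of_charge_ne hp hpB' hwp' (Ne.symm hc)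
  exact h.consecutive p l hBp hpB' hp hl hpl

theorem charge_B'_ne : charge j e B' ≠ charge j e B := by
  obtain ⟨w, hw, hc⟩ := h.incl'.exists_isStripPred_charge_ne h.adj.ne h.strip_B' h.strip_C'
  have hBw : B ≤ w := not_lt.1 fun hwB => hw.2.2 B hwB h.B_lt_B' h.strip_B
  rwa [← h.charge_eq_of_lt hw.2.1 hBw hw.1, ne_comm]

theorem fst_eq_iff_of_lt (hp : InStrip i j e p) (hBp : B ≤ p) (hpB' : p < B')
    (hq : InStrip i j e q) (hBq : B ≤ q) (hqB' : q < B') :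
    (e p).1 = (e q).1 ↔ (e p).2 = (e q).2 := by
  rw [hp.fst_eq_iff h.adj.ne hq, h.charge_eq_of_lt hp hBp hpB', h.charge_eq_of_lt hq hBq hqB']
  exact iff_true_left rfl

theorem fst_eq_B'_iff (hp : InStrip i j e p) (hBp : B ≤ p) (hpB' : p < B') :
    (e p).1 = (e B').1 ↔ (e p).2 ≠ (e B').2 := by
  rw [hp.fst_eq_iff h.adj.ne h.strip_B', h.charge_eq_of_lt hp hBp hpB']
  simp only [Ne.symm h.charge_B'_ne, false_iff]

theorem polyVert_of_le (hp : InStrip i j e p) (hBp : B ≤ p) (hpB' : p ≤ B') :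
    PolyVert i j e B B' C' p :=
  ⟨hp, hBp, hpB'.trans h.incl'.1.le, fun hB'p => hpB'.not_gt hB'p.1⟩

theorem polyVert_B : PolyVert i j e B B' C' B := h.polyVert_of_le h.strip_B le_rfl h.B_lt_B'.le

theorem polyVert_C : PolyVert i j e B B' C' C := h.polyVert_of_le h.strip_C h.incl.1.le h.C_le_B'

theorem polyVert_B' : PolyVert i j e B B' C' B' :=
  h.polyVert_of_le h.strip_B' h.B_lt_B'.le le_rfl

theorem polyVert_C' : PolyVert i j e B B' C' C' :=
  ⟨h.strip_C', (h.B_lt_B'.trans h.incl'.1).le, le_rfl, fun hC' => hC'.2.false⟩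

theorem isPred_of_polyHSide (hs : PolyHSide i j e B B' C' p q) : IsPred e p q := by
  obtain ⟨hp, hq, hpq, hlev, hgap⟩ := hs
  refine ⟨hpq, hlev, fun r hpr hrq hr => ?_⟩
  have hrs : InStrip i j e r := hq.1.of_level_eq hr
  rcases le_or_gt r B' with hrB' | hB'r
  · exact hgap r (h.polyVert_of_le hrs (hp.2.1.trans hpr.le) hrB') (hr.trans hlev.symm)
      ⟨hpr, hrq⟩
  · obtain rfl : q = C' := hq.le_or_eq.resolve_left fun hqB' => (hB'r.trans hrq).not_ge hqB'
    exact h.incl'.level_ne hB'r hrq hr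

theorem lt_B'_of_polyHSide (hs : PolyHSide i j e B B' C' p q) : p < B' := by
  obtain ⟨hp, hq, hpq, hlev, -⟩ := hs
  rcases hp.le_or_eq with hpB' | rfl
  · refine hpB'.lt_of_ne ?_
    rintro rfl
    obtain rfl : q = C' := hq.le_or_eq.resolve_left hpq.not_ge
    exact h.incl'.2.1.ne hlev
  · exact absurd hq.2.2.1 hpq.not_ge

theorem fst_eq_B'_iff_of_polyHSide (hs : PolyHSide i j e B B' C' p q) :
    (e p).1 = (e B').1 ↔ (e p).2 ≠ (e B').2 :=
  h.fst_eq_B'_iff hs.1.1 hs.1.2.1 (h.lt_B'_of_polyHSide hs)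

theorem not_polyHSide_C : ¬ PolyHSide i j e B B' C' q C := by
  rintro ⟨hq, -, hqC, hlev, -⟩
  rcases hq.2.1.eq_or_lt with rfl | hBq
  · exact h.incl.2.1.ne hlev
  · exact h.incl.level_ne hBq hqC hlev

theorem not_polyHSide_B' : ¬ PolyHSide i j e B B' C' B' q := by
  rintro ⟨-, hq, hB'q, hlev, -⟩
  obtain rfl : q = C' := hq.le_or_eq.resolve_left hB'q.not_ge
  exact h.incl'.2.1.ne hlev

theorem exists_polyLeft_iff (hp : PolyVert i j e B B' C' p) :
    ∃ x, ∀ q, PolyLeft i j e B C B' C' p q ↔ q = x := by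
  have hBC : B ≠ C := h.incl.1.ne
  by_cases hpB : p = B
  · subst p
    refine ⟨C, fun q => ?_⟩
    have hq : ¬ PolyHSide i j e B B' C' q B := fun hs => hs.2.2.1.not_ge hs.1.2.1
    simp [PolyLeft, hq, hBC]
  by_cases hpC : p = C
  · subst p
    refine ⟨B, fun q => ?_⟩
    simp [PolyLeft, h.not_polyHSide_C, hBC.symm]
  obtain ⟨x, hx⟩ : ∃ x, PolyHSide i j e B B' C' x p := by
    have hBp : B < p := hp.2.1.lt_of_ne (Ne.symm hpB)
    rcases h.level_eq_B_or_C hp.1 with hlev | hlev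
    · exact exists_polyHSide_left h.polyVert_B hp hBp hlev.symm
    · refine exists_polyHSide_left h.polyVert_C hp ?_ hlev.symm
      by_contra! hpC'
      exact h.incl.level_ne hBp (hpC'.lt_of_ne hpC) hlev
  refine ⟨x, fun q => ?_⟩
  simp only [PolyLeft, hpB, hpC, false_and, or_false]
  exact ⟨fun hq => hq.left_unique hx, fun hq => hq ▸ hx⟩

theorem exists_polyRight_iff (hp : PolyVert i j e B B' C' p) :
    ∃ y, ∀ q, PolyRight i j e B B' C' p q ↔ q = y := by
  have hB'C' : B' ≠ C' := h.incl'.1.ne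
  by_cases hpB' : p = B'
  · subst p
    refine ⟨C', fun q => ?_⟩
    simp [PolyRight, h.not_polyHSide_B', hB'C']
  by_cases hpC' : p = C'
  · subst p
    refine ⟨B', fun q => ?_⟩
    have hq : ¬ PolyHSide i j e B B' C' C' q := fun hs => hs.2.2.1.not_ge hs.2.1.2.2.1
    simp [PolyRight, hq, hB'C'.symm]
  obtain ⟨y, hy⟩ : ∃ y, PolyHSide i j e B B' C' p y := by
    have hpB'' : p < B' := (hp.le_or_eq.resolve_right hpC').lt_of_ne hpB'
    rcases h.level_eq_B'_or_C' hp.1 with hlev | hlev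
    · exact exists_polyHSide_right hp h.polyVert_B' hpB'' hlev
    · exact exists_polyHSide_right hp h.polyVert_C' (hpB''.trans h.incl'.1) hlev
  refine ⟨y, fun q => ?_⟩
  simp only [PolyRight, hpB', hpC', false_and, or_false]
  exact ⟨fun hq => hq.right_unique hy, fun hq => hq ▸ hy⟩

theorem dirEdge_swap_iff_of_polySide (hs : PolySide i j e B C B' C' p q) :
    DirEdge P e q p ↔ ¬ DirEdge P e p q := by
  rcases hs with ⟨rfl, rfl⟩ | ⟨rfl, rfl⟩ | hs
  · simp [h.incl.dirEdge_swap_iff, h.incl.dirEdge_iff]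
  · simp [h.incl'.dirEdge_swap_iff, h.incl'.dirEdge_iff]
  · have hs := h.isPred_of_polyHSide hs
    simp [hs.dirEdge_swap_iff, hs.dirEdge_iff]

theorem dirEdge_swap_iff (hs : PolySide i j e B C B' C' p q ∨ PolySide i j e B C B' C' q p) :
    DirEdge P e q p ↔ ¬ DirEdge P e p q :=
  hs.elim h.dirEdge_swap_iff_of_polySide fun hs =>
    iff_not_comm.1 (h.dirEdge_swap_iff_of_polySide hs)

theorem dirEdge_left_iff_dirEdge_right (hx : PolyLeft i j e B C B' C' p x)
    (hy : PolyRight i j e B B' C' p y) :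
    DirEdge P e x p ↔ DirEdge P e p y := by
  rcases hx with hx | ⟨rfl, rfl⟩ | ⟨rfl, rfl⟩ <;>
    rcases hy with hy | ⟨rfl, rfl⟩ | ⟨rfl, rfl⟩
  · rw [(h.isPred_of_polyHSide hx).dirEdge_iff, (h.isPred_of_polyHSide hy).dirEdge_iff,
      (h.fst_eq_iff_of_lt hx.1.1 hx.1.2.1 (h.lt_B'_of_polyHSide hx) hy.1.1 hy.1.2.1
        (h.lt_B'_of_polyHSide hy)).2 hx.2.2.2.1]
  · have hne : (e x).1 ≠ (e p).1 :=
      mt (h.fst_eq_B'_iff_of_polyHSide hx).1 (not_not.2 hx.2.2.2.1)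
    rw [(h.isPred_of_polyHSide hx).dirEdge_iff, h.incl'.dirEdge_iff, Bool.eq_not.2 hne]
    simp
  · have heq : (e x).1 = (e y).1 := (h.fst_eq_B'_iff_of_polyHSide hx).2
      (hx.2.2.2.1.trans_ne h.incl'.2.1.ne.symm)
    rw [(h.isPred_of_polyHSide hx).dirEdge_iff, h.incl'.dirEdge_swap_iff, heq]
  · rw [h.incl.dirEdge_swap_iff, (h.isPred_of_polyHSide hy).dirEdge_iff]
  · exact absurd h.B_lt_B' (lt_irrefl _)
  · exact absurd (h.B_lt_B'.trans h.incl'.1) (lt_irrefl _)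
  · have hne : (e p).1 ≠ (e x).1 := mt (h.fst_eq_iff_of_lt hy.1.1 hy.1.2.1
      (h.lt_B'_of_polyHSide hy) h.strip_B le_rfl h.B_lt_B').1 h.incl.2.1.ne.symm
    rw [h.incl.dirEdge_iff, (h.isPred_of_polyHSide hy).dirEdge_iff, Bool.eq_not.2 hne]
    simp
  · have heq : (e x).1 = (e p).1 :=
      (h.fst_eq_B'_iff h.strip_B le_rfl h.B_lt_B').2 h.incl.2.1.ne
    rw [h.incl.dirEdge_iff, h.incl'.dirEdge_iff, heq]
  · exact absurd h.C_lt_C' (lt_irrefl _)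

end ConsecutiveInclined

end

theorem strip_polygon_directed_cycle_general (P : SimpleGraph V) {m : ℕ} (e : Fin m → Bool × V)
    (i j : V) (hij : P.Adj i j) (B C B' C' : Fin m)
    (hB : InStrip i j e B) (hC : InStrip i j e C)
    (hB' : InStrip i j e B') (hC' : InStrip i j e C')
    (h1 : InclCond P e B C) (h2 : InclCond P e B' C')
    (hBB' : B < B') (hCC' : C < C')
    (hcons : ∀ D E : Fin m, B < D → D < B' → InStrip i j e D → InStrip i j e E →
      ¬ InclCond P e D E) :
    ∀ p, PolyVert i j e B B' C' p →
      (∃! q, (PolySide i j e B C B' C' p q ∨ PolySide i j e B C B' C' q p) ∧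
        DirEdge P e p q) ∧
      (∃! q, (PolySide i j e B C B' C' p q ∨ PolySide i j e B C B' C' q p) ∧
        DirEdge P e q p) := by
  have h : ConsecutiveInclined P e i j B C B' C' :=
    ⟨hij, hB, hC, hB', hC', h1, h2, hBB', hCC', hcons⟩
  intro p hp
  obtain ⟨x, hx⟩ := h.exists_polyLeft_iff hp
  obtain ⟨y, hy⟩ := h.exists_polyRight_iff hp
  refine existsUnique_out_and_in (fun q => ?_) (fun _ => h.dirEdge_swap_iff)
    (h.dirEdge_left_iff_dirEdge_right ((hx x).2 rfl) ((hy y).2 rfl))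
  rw [polySide_or_polySide_iff, hx, hy]

/-- Theorem 3.3 (b): the boundary of the triangle or trapezoid formed by two consecutive
inclined edges of a strip and the horizontal segments between them is a directed cycle:
every vertex of the polygon has exactly one outgoing and exactly one incoming boundary side. -/
theorem strip_polygon_directed_cycle (P : SimpleGraph V)
    (cs : CoxeterSystem (coxeterMatrix P) W)
    (u v : W) {m : ℕ} (hm : m = cs.length u + cs.length v)
    (e : Fin m → Bool × V) (he : IsRWordPair P cs u v e)
    (i j : V) (hij : P.Adj i j) (B C B' C' : Fin m)
    (hB : InStrip i j e B) (hC : InStrip i j e C)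
    (hB' : InStrip i j e B') (hC' : InStrip i j e C')
    (h1 : InclCond P e B C) (h2 : InclCond P e B' C')
    (hBB' : B < B') (hCC' : C < C')
    (hcons : ∀ D E : Fin m, B < D → D < B' → InStrip i j e D → InStrip i j e E →
      ¬ InclCond P e D E) :
    ∀ p, PolyVert i j e B B' C' p →
      (∃! q, (PolySide i j e B C B' C' p q ∨ PolySide i j e B C B' C' q p) ∧
        DirEdge P e p q) ∧
      (∃! q, (PolySide i j e B C B' C' p q ∨ PolySide i j e B C B' C' q p) ∧
        DirEdge P e q p) :=
  strip_polygon_directed_cycle_general P e i j hij B C B' C' hB hC hB' hC' h1 h2 hBB' hCC' hcons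

end SLC
end

section
/- Let v ∈ V. If Ω(k, v + u) = 0 for all k ∈ K and u ∈ U, then the intersection (v + U) ∩ V^Γ is a parallel translate (i.e., a coset) of K; otherwise, this intersection is empty. -/
/-!
A vector `x` is fixed by `Γ` iff `Ω(x, ·)` vanishes on `U`, so `(v + U) ∩ V^Γ` consists of the
`v + u` with `Ω(v + u, ·)|U = 0`; once it contains some `w`, it is `w + K`. It is nonempty iff
`Ω(v, ·)|U` equals some `-Ω(u, ·)|U`, and in finite dimension the functionals of this form are
exactly those killing the radical `K`.
-/

namespace TF2

variable {V : Type*} [AddCommGroup V] [Module (ZMod 2) V]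

/-- The symplectic transvection `τ_b(x) = x - Ω(x, b) b`. -/
def transv (Om : V →ₗ[ZMod 2] V →ₗ[ZMod 2] ZMod 2) (b : V) (x : V) : V :=
  x - Om x b • b

/-- The group `Γ` of transformations of `V` generated by the transvections `τ_b`, `b ∈ B`. -/
def Gamma (Om : V →ₗ[ZMod 2] V →ₗ[ZMod 2] ZMod 2) (B : Set V) : Subgroup (Equiv.Perm V) :=
  Subgroup.closure {g | ∃ b ∈ B, ⇑g = transv Om b}

/-- The set `V^Γ` of `Γ`-invariant vectors. -/
def fixedSet (Om : V →ₗ[ZMod 2] V →ₗ[ZMod 2] ZMod 2) (B : Set V) : Set V :=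
  {x | ∀ g ∈ Gamma Om B, g x = x}

/-- The parallel translate `v + U` of the span `U` of `B`. -/
def slice (B : Set V) (v : V) : Set V :=
  {x | ∃ u ∈ Submodule.span (ZMod 2) B, x = v + u}

/-- The kernel `K` of the restriction of `Ω` to the span `U` of `B`, as a set. -/
def kerRestrict (Om : V →ₗ[ZMod 2] V →ₗ[ZMod 2] ZMod 2) (B : Set V) : Set V :=
  {k | k ∈ Submodule.span (ZMod 2) B ∧ ∀ u ∈ Submodule.span (ZMod 2) B, Om k u = 0}

/-- The graph on `B` with `b`, `b'` adjacent iff `Ω(b, b') = 1`. -/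
def bGraph (Om : V →ₗ[ZMod 2] V →ₗ[ZMod 2] ZMod 2) (B : Set V) : SimpleGraph B where
  Adj b b' := b ≠ b' ∧ Om b b' = 1 ∧ Om b' b = 1
  symm := by
    constructor
    rintro x y ⟨h1, h2, h3⟩
    exact ⟨h1.symm, h3, h2⟩
  loopless := by
    constructor
    rintro x ⟨h1, -⟩
    exact h1 rfl

/-- The Dynkin graph `E₆`: a path `0 - 1 - 2 - 3 - 4` with an extra vertex `5` attached to
the middle vertex `2`. -/
def dynkinE6 : SimpleGraph (Fin 6) :=
  SimpleGraph.fromRel fun x y =>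
    (x = 0 ∧ y = 1) ∨ (x = 1 ∧ y = 2) ∨ (x = 2 ∧ y = 3) ∨ (x = 3 ∧ y = 4) ∨ (x = 2 ∧ y = 5)

/-- A graph is `E₆`-compatible if it is connected and contains an induced subgraph on six
vertices isomorphic to the Dynkin graph `E₆`. -/
def E6Compatible {α : Type*} (G : SimpleGraph α) : Prop :=
  G.Connected ∧ ∃ f : Fin 6 → α, Function.Injective f ∧
    ∀ x y, G.Adj (f x) (f y) ↔ dynkinE6.Adj x y

theorem _root_.LinearMap.IsRefl.exists_mem_forall_apply_eq {K M : Type*} [Field K]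
    [AddCommGroup M] [Module K M] {Φ : M →ₗ[K] M →ₗ[K] K} (hΦ : Φ.IsRefl)
    (U : Submodule K M) [FiniteDimensional K U] (φ : Module.Dual K M)
    (hφ : ∀ k ∈ U, (∀ u ∈ U, Φ k u = 0) → φ k = 0) :
    ∃ u₀ ∈ U, ∀ u ∈ U, Φ u₀ u = φ u := by
  -- `φ|U` kills the kernel of `u ↦ Φ(·, u)|U`, so it lies in the range of the dual map, whose
  -- elements are evaluations `ψ ↦ ψ u₀` since `U` is finite-dimensional.
  set f := (Φ.domRestrict₁₂ U U).flip
  have hmem : φ.domRestrict U ∈ LinearMap.range f.dualMap := by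
    rw [LinearMap.range_dualMap_eq_dualAnnihilator_ker, Submodule.mem_dualAnnihilator]
    exact fun k hk => hφ k k.2 fun u hu => hΦ _ _ (LinearMap.congr_fun hk ⟨u, hu⟩)
  obtain ⟨ψ, hψ⟩ := hmem
  obtain ⟨u₀, rfl⟩ := (Module.evalEquiv K U).surjective ψ
  exact ⟨u₀, u₀.2, fun u hu => LinearMap.congr_fun hψ ⟨u, hu⟩⟩

section

variable {Om : V →ₗ[ZMod 2] V →ₗ[ZMod 2] ZMod 2} {B : Set V}

theorem transv_eq_self_iff {b x : V} : transv Om b x = x ↔ Om x b = 0 := by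
  rw [transv, sub_eq_self, smul_eq_zero]
  refine ⟨?_, Or.inl⟩
  rintro (h | rfl)
  · exact h
  · exact map_zero (Om x)

theorem transv_involutive (hAlt : Om.IsAlt) (b : V) : Function.Involutive (transv Om b) := by
  intro x
  simp only [transv, map_sub, map_smul, LinearMap.sub_apply, LinearMap.smul_apply, hAlt b,
    smul_eq_mul, mul_zero, sub_zero, sub_sub, ← add_smul, CharTwo.add_self_eq_zero, zero_smul]

theorem mem_fixedSet_iff_forall_mem (hAlt : Om.IsAlt) {x : V} :
    x ∈ fixedSet Om B ↔ ∀ b ∈ B, Om x b = 0 := by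
  have hstab : x ∈ fixedSet Om B ↔ Gamma Om B ≤ MulAction.stabilizer (Equiv.Perm V) x :=
    Iff.rfl
  rw [hstab, Gamma, Subgroup.closure_le]
  constructor
  · intro h b hb
    exact transv_eq_self_iff.mp (h ⟨b, hb, (transv_involutive hAlt b).coe_toPerm⟩)
  · rintro h g ⟨b, hb, hg⟩
    exact (congrFun hg x).trans (transv_eq_self_iff.mpr (h b hb))

theorem mem_fixedSet_iff (hAlt : Om.IsAlt) {x : V} :
    x ∈ fixedSet Om B ↔ ∀ u ∈ Submodule.span (ZMod 2) B, Om x u = 0 := by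
  rw [mem_fixedSet_iff_forall_mem hAlt]
  exact (Submodule.span_le (p := LinearMap.ker (Om x))).symm

theorem mem_slice_iff {v x : V} : x ∈ slice B v ↔ x - v ∈ Submodule.span (ZMod 2) B :=
  ⟨by rintro ⟨u, hu, rfl⟩; simpa using hu, fun h => ⟨x - v, h, by abel⟩⟩

theorem exists_mem_slice_inter_fixedSet (hAlt : Om.IsAlt)
    [FiniteDimensional (ZMod 2) (Submodule.span (ZMod 2) B)] {v : V}
    (hv : ∀ k ∈ kerRestrict Om B, Om k v = 0) : (slice B v ∩ fixedSet Om B).Nonempty := by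
  obtain ⟨u₀, hu₀, hrep⟩ := hAlt.isRefl.exists_mem_forall_apply_eq (Submodule.span (ZMod 2) B)
    (Om v) fun k hk hkU => hAlt.isRefl k v (hv k ⟨hk, hkU⟩)
  refine ⟨v - u₀, mem_slice_iff.mpr (by simpa using hu₀), (mem_fixedSet_iff hAlt).mpr ?_⟩
  intro u hu
  rw [map_sub, LinearMap.sub_apply, hrep u hu, sub_self]

theorem apply_eq_zero_of_mem_slice_inter_fixedSet (hAlt : Om.IsAlt) {v w : V}
    (hw : w ∈ slice B v ∩ fixedSet Om B) {k : V} (hk : k ∈ kerRestrict Om B) {u : V}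
    (hu : u ∈ Submodule.span (ZMod 2) B) : Om k (v + u) = 0 := by
  obtain ⟨hwv, hwfix⟩ := hw
  have hvu : v + u = w + (u - (w - v)) := by abel
  rw [hvu, map_add, hAlt.isRefl _ _ ((mem_fixedSet_iff hAlt).mp hwfix k hk.1), zero_add]
  exact hk.2 _ (sub_mem hu (mem_slice_iff.mp hwv))

theorem slice_inter_fixedSet_eq_image (hAlt : Om.IsAlt) {v w : V}
    (hw : w ∈ slice B v ∩ fixedSet Om B) :
    slice B v ∩ fixedSet Om B = (fun k => w + k) '' kerRestrict Om B := by
  obtain ⟨hwv, hwfix⟩ := hw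
  rw [mem_slice_iff] at hwv
  rw [mem_fixedSet_iff hAlt] at hwfix
  ext x
  rw [Set.image_add_left, Set.mem_preimage, Set.mem_inter_iff, mem_slice_iff,
    mem_fixedSet_iff hAlt, kerRestrict, Set.mem_ofPred_eq, neg_add_eq_sub]
  have hslice : x - v ∈ Submodule.span (ZMod 2) B ↔ x - w ∈ Submodule.span (ZMod 2) B := by
    rw [← Submodule.sub_mem_iff_left _ hwv]
    simp
  have hfix (u : V) (hu : u ∈ Submodule.span (ZMod 2) B) : Om x u = Om (x - w) u := by
    rw [map_sub, LinearMap.sub_apply, hwfix u hu, sub_zero]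
  rw [hslice]
  exact and_congr_right' (forall₂_congr fun u hu => by rw [hfix u hu])

end

variable {V : Type*} [AddCommGroup V] [Module (ZMod 2) V] [FiniteDimensional (ZMod 2) V]

theorem slice_inter_fixed_general (Om : V →ₗ[ZMod 2] V →ₗ[ZMod 2] ZMod 2)
    (hAlt : ∀ x, Om x x = 0) (B : Set V) (v : V) :
    ((∀ k ∈ kerRestrict Om B, ∀ u ∈ Submodule.span (ZMod 2) B, Om k (v + u) = 0) →
      ∃ w : V, slice B v ∩ fixedSet Om B = (fun k => w + k) '' kerRestrict Om B) ∧
    (¬ (∀ k ∈ kerRestrict Om B, ∀ u ∈ Submodule.span (ZMod 2) B, Om k (v + u) = 0) →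
      slice B v ∩ fixedSet Om B = ∅) := by
  constructor
  · intro hcompat
    obtain ⟨w, hw⟩ := exists_mem_slice_inter_fixedSet hAlt fun k hk => by
      simpa using hcompat k hk 0 (zero_mem _)
    exact ⟨w, slice_inter_fixedSet_eq_image hAlt hw⟩
  · intro hincompat
    refine Set.eq_empty_iff_forall_notMem.mpr fun w hw => hincompat ?_
    exact fun k hk u hu => apply_eq_zero_of_mem_slice_inter_fixedSet hAlt hw hk hu

/-- Proposition 6.1: if `Ω(K, v + U) = 0` then `(v + U) ∩ V^Γ` is a parallel translate of
`K`; otherwise this intersection is empty. -/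
theorem slice_inter_fixed (Om : V →ₗ[ZMod 2] V →ₗ[ZMod 2] ZMod 2)
    (hAlt : ∀ x, Om x x = 0) (B : Set V)
    (hB : LinearIndependent (ZMod 2) ((↑) : B → V)) (v : V) :
    ((∀ k ∈ kerRestrict Om B, ∀ u ∈ Submodule.span (ZMod 2) B, Om k (v + u) = 0) →
      ∃ w : V, slice B v ∩ fixedSet Om B = (fun k => w + k) '' kerRestrict Om B) ∧
    (¬ (∀ k ∈ kerRestrict Om B, ∀ u ∈ Submodule.span (ZMod 2) B, Om k (v + u) = 0) →
      slice B v ∩ fixedSet Om B = ∅) :=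
  slice_inter_fixed_general Om hAlt B v

end TF2
end

section
/- Let E ⊆ U be the linear span of 6 vectors of B that form an induced subgraph isomorphic to the Dynkin graph E₆. Then every 5-dimensional vector subspace of E contains at least two vectors w with Q(w) = 1. (Indeed, E consists of 28 vectors with Q = 0 and 36 vectors with Q = 1.) -/
namespace TF2

variable {V : Type*} [AddCommGroup V] [Module (ZMod 2) V]

/-! In the basis `b` of `E`, `Q (∑ εᵢ bᵢ) = ∑ εᵢ + ∑ εᵢ εⱼ`, the second sum running over the
edges `{i, j}` of `E₆`; counting the 64 coordinate vectors gives 28 zeros and 36 ones of `Q` on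
`E`. A 5-dimensional subspace of `E` has 32 of its 64 elements, so it meets the 36 vectors with
`Q = 1` in at least `32 + 36 - 64 = 4` of them. -/

instance : DecidableRel dynkinE6.Adj := fun x y =>
  decidable_of_iff _ (SimpleGraph.fromRel_adj _ x y).symm

def qE6 (e : Fin 6 → ZMod 2) : ZMod 2 :=
  e 0 + e 1 + e 2 + e 3 + e 4 + e 5 +
    e 0 * e 1 + e 1 * e 2 + e 2 * e 3 + e 3 * e 4 + e 2 * e 5

theorem natCard_qE6_eq_zero : Nat.card {ε : Fin 6 → ZMod 2 | qE6 ε = 0} = 28 := by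
  rw [Nat.card_eq_fintype_card]
  decide

theorem natCard_qE6_eq_one : Nat.card {ε : Fin 6 → ZMod 2 | qE6 ε = 1} = 36 := by
  rw [Nat.card_eq_fintype_card]
  decide

theorem zmod_two_eq_zero_or_one (a : ZMod 2) : a = 0 ∨ a = 1 := by
  revert a
  decide

theorem exists_ne_mem_inter_of_ncard_add_le {α : Type*} {s t u : Set α} (hu : u.Finite)
    (hs : s ⊆ u) (ht : t ⊆ u) (h : u.ncard + 2 ≤ s.ncard + t.ncard) :
    ∃ x ∈ s ∩ t, ∃ y ∈ s ∩ t, x ≠ y := by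
  have hunion : (s ∪ t).ncard ≤ u.ncard := Set.ncard_le_ncard (Set.union_subset hs ht) hu
  have := Set.ncard_union_add_ncard_inter s t (hu.subset hs) (hu.subset ht)
  exact (Set.one_lt_ncard ((hu.subset hs).subset Set.inter_subset_left)).1 (by omega)

theorem natCard_setOf_mem_range_and {α β γ : Type*} {f : α → β} (hf : Function.Injective f)
    (g : β → γ) (c : γ) :
    Nat.card {x | x ∈ Set.range f ∧ g x = c} = Nat.card {a | g (f a) = c} := by
  have : {x | x ∈ Set.range f ∧ g x = c} = f '' {a | g (f a) = c} := by
    ext x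
    constructor
    · rintro ⟨⟨a, rfl⟩, ha⟩
      exact ⟨a, ha, rfl⟩
    · rintro ⟨a, ha, rfl⟩
      exact ⟨⟨a, rfl⟩, ha⟩
  rw [this, Nat.card_image_of_injective hf]

theorem _root_.LinearIndependent.natCard_setOf_mem_span_and {ι R M γ : Type*} [Fintype ι] [Semiring R]
    [AddCommMonoid M] [Module R M] {b : ι → M} (hb : LinearIndependent R b) (g : M → γ) (c : γ) :
    Nat.card {x | x ∈ Submodule.span R (Set.range b) ∧ g x = c} =
      Nat.card {ε | g (Fintype.linearCombination R b ε) = c} := by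
  rw [← natCard_setOf_mem_range_and hb.fintypeLinearCombination_injective, ←
    LinearMap.coe_range, Fintype.range_linearCombination]
  rfl

theorem _root_.Submodule.ncard_eq_two_pow_finrank (W : Submodule (ZMod 2) V) [Module.Finite (ZMod 2) W] :
    (W : Set V).ncard = 2 ^ Module.finrank (ZMod 2) W := by
  rw [← Nat.card_coe_set_eq, SetLike.coe_sort_coe, Module.natCard_eq_pow_finrank (K := ZMod 2),
    Nat.card_zmod]

section QuadraticRefinement

variable {Om : V →ₗ[ZMod 2] V →ₗ[ZMod 2] ZMod 2} {Q : V → ZMod 2}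

theorem map_zero_of_polar (hQ : ∀ x y, Q (x + y) = Q x + Q y + Om x y) : Q 0 = 0 := by
  simpa using hQ 0 0

theorem map_smul_of_polar (hQ : ∀ x y, Q (x + y) = Q x + Q y + Om x y) (a : ZMod 2) (v : V) :
    Q (a • v) = a * Q v := by
  obtain rfl | rfl := zmod_two_eq_zero_or_one a
  · simp [map_zero_of_polar hQ]
  · simp

theorem map_linearCombination_eq_qE6 (hQ : ∀ x y, Q (x + y) = Q x + Q y + Om x y)
    {b : Fin 6 → V} (hQb : ∀ i, Q (b i) = 1)
    (hiso : ∀ x y, Om (b x) (b y) = 1 ↔ dynkinE6.Adj x y) (ε : Fin 6 → ZMod 2) :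
    Q (Fintype.linearCombination (ZMod 2) b ε) = qE6 ε := by
  have hOm : ∀ i j, Om (b i) (b j) = if dynkinE6.Adj i j then 1 else 0 := by
    intro i j
    split_ifs with h
    · exact (hiso i j).2 h
    · exact (zmod_two_eq_zero_or_one _).resolve_right (mt (hiso i j).1 h)
  rw [Fintype.linearCombination_apply, Fin.sum_univ_six]
  simp +decide only [hQ, map_smul_of_polar hQ, hQb, map_add, map_smul, LinearMap.add_apply,
    LinearMap.smul_apply, smul_eq_mul, hOm, ↓reduceIte, mul_one, mul_zero, zero_add, add_zero, qE6]
  ring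

end QuadraticRefinement

variable {V : Type*} [AddCommGroup V] [Module (ZMod 2) V] [FiniteDimensional (ZMod 2) V]

theorem five_dim_subspace_general (Om : V →ₗ[ZMod 2] V →ₗ[ZMod 2] ZMod 2)
    (B : Set V)
    (hB : LinearIndependent (ZMod 2) ((↑) : B → V))
    (Q : V → ZMod 2) (hQ : ∀ x y, Q (x + y) = Q x + Q y + Om x y)
    (hQB : ∀ b ∈ B, Q b = 1)
    (b : Fin 6 → V) (hbB : ∀ x, b x ∈ B) (hbinj : Function.Injective b)
    (hiso : ∀ x y, Om (b x) (b y) = 1 ↔ dynkinE6.Adj x y) :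
    (∀ Wsub : Submodule (ZMod 2) V, Wsub ≤ Submodule.span (ZMod 2) (Set.range b) →
      Module.finrank (ZMod 2) ↥Wsub = 5 →
      ∃ w₁ ∈ Wsub, ∃ w₂ ∈ Wsub, w₁ ≠ w₂ ∧ Q w₁ = 1 ∧ Q w₂ = 1) ∧
    Nat.card {x : V | x ∈ Submodule.span (ZMod 2) (Set.range b) ∧ Q x = 0} = 28 ∧
    Nat.card {x : V | x ∈ Submodule.span (ZMod 2) (Set.range b) ∧ Q x = 1} = 36 := by
  have hb : LinearIndependent (ZMod 2) b :=
    hB.comp (fun i => ⟨b i, hbB i⟩) fun _ _ h => hbinj (congrArg Subtype.val h)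
  have hcard : ∀ c, Nat.card {x | x ∈ Submodule.span (ZMod 2) (Set.range b) ∧ Q x = c} =
      Nat.card {ε | qE6 ε = c} := fun c => by
    simpa [map_linearCombination_eq_qE6 hQ (fun i => hQB _ (hbB i)) hiso] using
      hb.natCard_setOf_mem_span_and Q c
  refine ⟨fun W hW hW5 => ?_, (hcard 0).trans natCard_qE6_eq_zero,
    (hcard 1).trans natCard_qE6_eq_one⟩
  have hEcard : (Submodule.span (ZMod 2) (Set.range b) : Set V).ncard = 64 := by
    rw [Submodule.ncard_eq_two_pow_finrank, finrank_span_eq_card hb]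
    rfl
  have hScard : {x | x ∈ Submodule.span (ZMod 2) (Set.range b) ∧ Q x = 1}.ncard = 36 := by
    rw [← Nat.card_coe_set_eq, hcard, natCard_qE6_eq_one]
  obtain ⟨w₁, ⟨hw₁, -, hQw₁⟩, w₂, ⟨hw₂, -, hQw₂⟩, hne⟩ :=
    exists_ne_mem_inter_of_ncard_add_le
      (t := {x | x ∈ Submodule.span (ZMod 2) (Set.range b) ∧ Q x = 1})
      (Set.finite_of_ncard_ne_zero (by rw [hEcard]; simp)) hW (fun _ hx => hx.1)
      (by rw [hEcard, hScard, W.ncard_eq_two_pow_finrank, hW5]; norm_num)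
  exact ⟨w₁, hw₁, w₂, hw₂, hne, hQw₁, hQw₂⟩

/-- Lemma 6.4 (b): every 5-dimensional subspace of `E` contains at least two vectors with
`Q = 1`; indeed `E` consists of 28 vectors with `Q = 0` and 36 vectors with `Q = 1`. -/
theorem five_dim_subspace (Om : V →ₗ[ZMod 2] V →ₗ[ZMod 2] ZMod 2)
    (hAlt : ∀ x, Om x x = 0) (B : Set V)
    (hB : LinearIndependent (ZMod 2) ((↑) : B → V))
    (Q : V → ZMod 2) (hQ : ∀ x y, Q (x + y) = Q x + Q y + Om x y)
    (hQB : ∀ b ∈ B, Q b = 1)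
    (b : Fin 6 → V) (hbB : ∀ x, b x ∈ B) (hbinj : Function.Injective b)
    (hiso : ∀ x y, Om (b x) (b y) = 1 ↔ dynkinE6.Adj x y) :
    (∀ Wsub : Submodule (ZMod 2) V, Wsub ≤ Submodule.span (ZMod 2) (Set.range b) →
      Module.finrank (ZMod 2) ↥Wsub = 5 →
      ∃ w₁ ∈ Wsub, ∃ w₂ ∈ Wsub, w₁ ≠ w₂ ∧ Q w₁ = 1 ∧ Q w₂ = 1) ∧
    Nat.card {x : V | x ∈ Submodule.span (ZMod 2) (Set.range b) ∧ Q x = 0} = 28 ∧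
    Nat.card {x : V | x ∈ Submodule.span (ZMod 2) (Set.range b) ∧ Q x = 1} = 36 :=
  five_dim_subspace_general Om B hB Q hQ hQB b hbB hbinj hiso

end TF2
end

section
/- Suppose the graph B is E₆-compatible. Then the function Q is nonconstant on each nonempty set of the form (v + U) ∖ V^Γ; that is, for every v ∈ V ∖ V^Γ there exists u ∈ U with v + u ∉ V^Γ and Q(v + u) = Q(v) + 1. -/
/-!
If `Q` took a single value on `(v + U) \ V^Γ`, the polarization identity
`Ω(u, u') = Q(v + u + u') - Q(v + u) - Q(v + u') + Q(v)` would force, for every edge `{p, q}` of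
`B`, one of `v + p`, `v + q`, `v + p + q` to be `Γ`-invariant. Invariant vectors are
`Ω`-orthogonal to `B`, so two invariant vectors of `v + U` pair in the same way with every
`b ∈ B`. Two edges `{a₀, a₁}`, `{a₃, a₄}` of `E₆` with no edge between them then give invariant
vectors `v + x`, `v + y` with `x ∈ {a₀, a₁, a₀ + a₁}` and `y ∈ {a₃, a₄, a₃ + a₄}`; but `y` is
orthogonal to `a₀` and `a₁` while `x` is not.
-/

namespace TF2

variable {V : Type*} [AddCommGroup V] [Module (ZMod 2) V]

section Bilinear

variable {R V : Type*} [CommRing R] [AddCommGroup V] [Module R V] {Om : V →ₗ[R] V →ₗ[R] R}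

theorem apply_eq_zero_of_mem_triple {r s x b : V} (hx : x ∈ ({r, s, r + s} : Set V))
    (hr : Om r b = 0) (hs : Om s b = 0) : Om x b = 0 := by
  rcases hx with rfl | rfl | rfl <;> simp [hr, hs]

theorem apply_ne_zero_or_apply_ne_zero_of_mem_triple {p q x : V}
    (hx : x ∈ ({p, q, p + q} : Set V)) (hpp : Om p p = 0) (hpq : Om p q ≠ 0)
    (hqp : Om q p ≠ 0) : Om x p ≠ 0 ∨ Om x q ≠ 0 := by
  rcases hx with rfl | rfl | rfl
  · exact .inr hpq
  · exact .inl hqp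
  · left
    simpa [hpp] using hqp

variable {Q : V → R}

theorem apply_comm_of_polar (hQ : ∀ x y, Q (x + y) = Q x + Q y + Om x y) (x y : V) :
    Om x y = Om y x := by
  have h := hQ x y
  rw [add_comm x y, hQ y x] at h
  linear_combination -h

theorem apply_eq_polarization (hQ : ∀ x y, Q (x + y) = Q x + Q y + Om x y) (v u u' : V) :
    Om u u' = Q (v + u + u') - Q (v + u) - Q (v + u') + Q v := by
  rw [hQ (v + u) u', hQ v u', map_add, LinearMap.add_apply]
  ring

theorem exists_add_mem_of_const_off (hQ : ∀ x y, Q (x + y) = Q x + Q y + Om x y)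
    {U : Submodule R V} {S : Set V} {v p q : V}
    (hconst : ∀ u ∈ U, v + u ∉ S → Q (v + u) = Q v) (hp : p ∈ U) (hq : q ∈ U)
    (hpq : Om p q ≠ 0) : ∃ x ∈ ({p, q, p + q} : Set V), v + x ∈ S := by
  by_contra! h
  simp only [Set.mem_insert_iff, Set.mem_singleton_iff, forall_eq_or_imp, forall_eq] at h
  obtain ⟨hpS, hqS, hpqS⟩ := h
  apply hpq
  rw [apply_eq_polarization hQ v, add_assoc, hconst _ (U.add_mem hp hq) hpqS, hconst p hp hpS,
    hconst q hq hqS]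
  ring

end Bilinear

variable {Om : V →ₗ[ZMod 2] V →ₗ[ZMod 2] ZMod 2} {B : Set V}

theorem apply_self_eq_zero_of_polar {Q : V → ZMod 2}
    (hQ : ∀ x y, Q (x + y) = Q x + Q y + Om x y) (x : V) : Om x x = 0 := by
  have hx := hQ x x
  have h0 := hQ 0 0
  have hxx : x + x = 0 := by
    rw [← one_smul (ZMod 2) x, ← add_smul, CharTwo.add_self_eq_zero, zero_smul]
  rw [hxx] at hx
  simp only [add_zero, map_zero, CharTwo.add_self_eq_zero] at h0
  rwa [h0, CharTwo.add_self_eq_zero, zero_add, eq_comm] at hx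

theorem transv_transv {b : V} (hbb : Om b b = 0) (x : V) : transv Om b (transv Om b x) = x := by
  simp only [transv, map_sub, map_smul, LinearMap.sub_apply, LinearMap.smul_apply, hbb,
    smul_eq_mul, mul_zero, sub_zero]
  rw [sub_sub, ← add_smul, CharTwo.add_self_eq_zero, zero_smul, sub_zero]

def transvPerm {b : V} (hbb : Om b b = 0) : Equiv.Perm V :=
  ⟨transv Om b, transv Om b, transv_transv hbb, transv_transv hbb⟩

theorem transvPerm_mem_Gamma {b : V} (hb : b ∈ B) (hbb : Om b b = 0) :
    transvPerm hbb ∈ Gamma Om B :=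
  Subgroup.subset_closure ⟨b, hb, rfl⟩

theorem apply_eq_zero_of_mem_fixedSet {x b : V} (hx : x ∈ fixedSet Om B) (hb : b ∈ B)
    (hbb : Om b b = 0) : Om x b = 0 := by
  have h : Om x b • b = 0 := sub_eq_self.mp (hx _ (transvPerm_mem_Gamma hb hbb))
  rcases smul_eq_zero.mp h with h | rfl
  · exact h
  · exact map_zero _

theorem apply_eq_of_add_mem_fixedSet {v x y b : V} (hx : v + x ∈ fixedSet Om B)
    (hy : v + y ∈ fixedSet Om B) (hb : b ∈ B) (hbb : Om b b = 0) : Om x b = Om y b := by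
  have hx' := apply_eq_zero_of_mem_fixedSet hx hb hbb
  have hy' := apply_eq_zero_of_mem_fixedSet hy hb hbb
  rw [map_add, LinearMap.add_apply] at hx' hy'
  exact add_left_cancel (hx'.trans hy'.symm)

theorem bGraph_apply_eq_zero (hsymm : ∀ x y, Om x y = Om y x) {b b' : B} (hne : b ≠ b')
    (h : ¬(bGraph Om B).Adj b b') : Om b b' = 0 := by
  by_contra h'
  have hone : Om b b' = 1 := Fin.eq_one_of_ne_zero _ h'
  exact h ⟨hne, hone, hsymm b b' ▸ hone⟩

instance inst_s19 : DecidableRel dynkinE6.Adj := fun x y =>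
  decidable_of_iff _ (SimpleGraph.fromRel_adj _ x y).symm

variable {V : Type*} [AddCommGroup V] [Module (ZMod 2) V] [FiniteDimensional (ZMod 2) V]

theorem Q_nonconstant_general (Om : V →ₗ[ZMod 2] V →ₗ[ZMod 2] ZMod 2)
    (B : Set V)
    (hE6 : E6Compatible (bGraph Om B))
    (Q : V → ZMod 2) (hQ : ∀ x y, Q (x + y) = Q x + Q y + Om x y)
    (v : V) :
    ∃ u ∈ Submodule.span (ZMod 2) B, v + u ∉ fixedSet Om B ∧ Q (v + u) = Q v + 1 := by
  obtain ⟨-, a, ha, haAdj⟩ := hE6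
  have hAlt := apply_self_eq_zero_of_polar hQ
  have adj {i j} (h : dynkinE6.Adj i j) : Om (a i) (a j) ≠ 0 := by
    rw [((haAdj i j).2 h).2.1]
    exact one_ne_zero
  have nonadj {i j} (h : i ≠ j ∧ ¬dynkinE6.Adj i j) : Om (a i) (a j) = 0 :=
    bGraph_apply_eq_zero (apply_comm_of_polar hQ) (ha.ne h.1) (mt (haAdj i j).1 h.2)
  have mem i : (a i : V) ∈ Submodule.span (ZMod 2) B := Submodule.subset_span (a i).2
  by_contra! hne
  have hconst u (hu : u ∈ Submodule.span (ZMod 2) B) (huF : v + u ∉ fixedSet Om B) :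
      Q (v + u) = Q v := by
    by_contra h
    exact hne u hu huF (eq_add_of_sub_eq' (Fin.eq_one_of_ne_zero _ (sub_ne_zero.2 h)))
  obtain ⟨x, hx, hxF⟩ := exists_add_mem_of_const_off hQ hconst (mem 0) (mem 1) (adj (by decide))
  obtain ⟨y, hy, hyF⟩ := exists_add_mem_of_const_off hQ hconst (mem 3) (mem 4) (adj (by decide))
  have orth {i} (h3 : 3 ≠ i ∧ ¬dynkinE6.Adj 3 i) (h4 : 4 ≠ i ∧ ¬dynkinE6.Adj 4 i) :
      Om x (a i) = 0 :=
    (apply_eq_of_add_mem_fixedSet hxF hyF (a i).2 (hAlt _)).trans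
      (apply_eq_zero_of_mem_triple hy (nonadj h3) (nonadj h4))
  rcases apply_ne_zero_or_apply_ne_zero_of_mem_triple hx (hAlt _) (adj (by decide))
    (adj (by decide)) with h | h
  exacts [h (orth (by decide) (by decide)), h (orth (by decide) (by decide))]

/-- Lemma 6.5: if the graph `B` is `E₆`-compatible then `Q` is nonconstant on each set
`(v + U) \\ V^Γ`. -/
theorem Q_nonconstant (Om : V →ₗ[ZMod 2] V →ₗ[ZMod 2] ZMod 2)
    (hAlt : ∀ x, Om x x = 0) (B : Set V)
    (hB : LinearIndependent (ZMod 2) ((↑) : B → V))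
    (hE6 : E6Compatible (bGraph Om B))
    (Q : V → ZMod 2) (hQ : ∀ x y, Q (x + y) = Q x + Q y + Om x y)
    (hQB : ∀ b ∈ B, Q b = 1)
    (v : V) (hv : v ∉ fixedSet Om B) :
    ∃ u ∈ Submodule.span (ZMod 2) B, v + u ∉ fixedSet Om B ∧ Q (v + u) = Q v + 1 :=
  Q_nonconstant_general Om B hE6 Q hQ v

end TF2
end
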